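/- Let 1 ≤ k ≤ n−1 be integers and K ⊂ ℝⁿ a convex body with δ_L(K) < d_{n,k}(K). Then for every full-rank lattice L ⊂ ℝⁿ such that {K + x : x ∈ L} is a packing (the translates have pairwise disjoint interiors), there exists a k-dimensional affine subspace A_k ⊂ ℝⁿ such that the interior of A_k + ((d_{n,k}(K)/δ_L(K))^{1/n} − 1)·(−K) is disjoint from ⋃_{x∈L}(K + x). -/

import Mathlib

/-
Scaling the packing lattice `L` by `t⁻¹` gives a lattice of density
`t ^ n · V(K) / D(L) ≤ t ^ n · δ_L(K)`, which is below `d_{n,k}(K)` for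
`t < λ := (d_{n,k}(K) / δ_L(K)) ^ (1 / n)`; so it is not `k`-impassable and, scaling back, some
`k`-flat misses every `x + t K`, `x ∈ L`. Translating `K` so that `0 ∈ int K` makes the dilates
`t K` increase with `t`; reducing the base points of the flats modulo `L` and extracting a
convergent subsequence as `t ↑ λ` gives one flat `A` missing `x + t K` for all `t < λ`.
Finally, a point of `int (A + (λ - 1) (-K)) ∩ (x + K)` already lies in `A + s (-K)` for some
`s < λ - 1`, and would give a point of `A` in `x + (1 + s) K`.
-/

open scoped Pointwise
open MeasureTheory RealInnerProductSpace

noncomputable section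

/-- Euclidean `n`-space. -/
abbrev Euc (n : ℕ) : Type := EuclideanSpace ℝ (Fin n)

/-- The (full-rank, when `b` is linearly independent) lattice generated by `b`. -/
def latticeOf {n : ℕ} (b : Fin n → Euc n) : Set (Euc n) :=
  { x | ∃ c : Fin n → ℤ, x = ∑ i, (c i : ℝ) • b i }

/-- Covolume (absolute determinant) of the lattice generated by `b`. -/
def covol {n : ℕ} (b : Fin n → Euc n) : ℝ :=
  |Matrix.det (Matrix.of fun i j => b i j)|

/-- A convex body: convex, compact, with nonempty interior. -/
def IsConvexBody {n : ℕ} (K : Set (Euc n)) : Prop :=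
  Convex ℝ K ∧ IsCompact K ∧ (interior K).Nonempty

/-- The lattice `L` of translates of `K` is `k`-impassable: every `k`-dimensional affine
subspace of `ℝⁿ` meets some translate `x + K`, `x ∈ L`. -/
def IsImpassable {n : ℕ} (k : ℕ) (K L : Set (Euc n)) : Prop :=
  ∀ (W : Submodule ℝ (Euc n)) (v : Euc n), Module.finrank ℝ W = k →
    ∃ x ∈ L, ((v +ᵥ (W : Set (Euc n))) ∩ (x +ᵥ K)).Nonempty

/-- `d_{n,k}(K)`: the infimum of densities of `k`-impassable lattices of translates of `K`. -/
def dImp (n k : ℕ) (K : Set (Euc n)) : ℝ :=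
  sInf { d : ℝ | ∃ b : Fin n → Euc n, LinearIndependent ℝ b ∧
    IsImpassable k K (latticeOf b) ∧ d = (volume K).toReal / covol b }

/-- The closed unit ball `Bⁿ`. -/
def unitBall (n : ℕ) : Set (Euc n) := Metric.closedBall 0 1

/-- `κ_n`, the volume of the unit ball. -/
def ballVol (n : ℕ) : ℝ := (volume (unitBall n)).toReal

/-- `d_{n,k} = d_{n,k}(Bⁿ)`. -/
def dImpBall (n k : ℕ) : ℝ := dImp n k (unitBall n)

/-- The lattice generated by `b` gives a lattice packing of translates of `K`. -/
def IsLatticePacking {n : ℕ} (K : Set (Euc n)) (b : Fin n → Euc n) : Prop :=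
  LinearIndependent ℝ b ∧
    (latticeOf b).Pairwise fun x y => Disjoint (interior (x +ᵥ K)) (interior (y +ᵥ K))

/-- `δ_L(K)`: density of the densest lattice packing by translates of `K`. -/
def packingDensity (n : ℕ) (K : Set (Euc n)) : ℝ :=
  sSup { d : ℝ | ∃ b : Fin n → Euc n, IsLatticePacking K b ∧ d = (volume K).toReal / covol b }

/-- `ϑ_L(Bᵐ)`: density of the thinnest lattice covering of `ℝᵐ` by unit balls. -/
def coveringDensityBall (m : ℕ) : ℝ :=
  sInf { d : ℝ | ∃ b : Fin m → Euc m, LinearIndependent ℝ b ∧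
    (⋃ x ∈ latticeOf b, x +ᵥ unitBall m) = Set.univ ∧ d = ballVol m / covol b }

/-- The `k`-dimensional covolume of the sublattice spanned by `c` (square root of the
Gram determinant). -/
def subCovol {n k : ℕ} (c : Fin k → Euc n) : ℝ :=
  Real.sqrt |Matrix.det (Matrix.of fun i j => (⟪c i, c j⟫ : ℝ))|

/-- `D_k(L)`: minimum of the `k`-dimensional covolumes of `k`-dimensional sublattices
of the lattice generated by `b`. -/
def Dk (n k : ℕ) (b : Fin n → Euc n) : ℝ :=
  sInf { d : ℝ | ∃ c : Fin k → Euc n, LinearIndependent ℝ c ∧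
    (∀ i, c i ∈ latticeOf b) ∧ d = subCovol c }

/-- `c_{n,k}`: least constant `c > 0` with `D_k(L) ≤ c · D(L)^{k/n}` for all full-rank `L`. -/
def cConst (n k : ℕ) : ℝ :=
  sInf { c : ℝ | 0 < c ∧ ∀ b : Fin n → Euc n, LinearIndependent ℝ b →
    Dk n k b ≤ c * covol b ^ ((k : ℝ) / (n : ℝ)) }

/-- A zonotope: a finite Minkowski sum of segments. -/
def IsZonotope {n : ℕ} (K : Set (Euc n)) : Prop :=
  ∃ (m : ℕ) (a c : Fin m → Euc n), K = ∑ i : Fin m, segment ℝ (a i) (c i)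

/-- A zonoid: a convex body that is a Hausdorff limit of zonotopes. -/
def IsZonoid {n : ℕ} (K : Set (Euc n)) : Prop :=
  IsConvexBody K ∧ ∃ Z : ℕ → Set (Euc n), (∀ j, IsZonotope (Z j)) ∧
    Filter.Tendsto (fun j => Metric.hausdorffDist (Z j) K) Filter.atTop (nhds 0)

/-- The polar body `K* = {y | ⟨x,y⟩ ≤ 1 for all x ∈ K}`. -/
def polarBody {n : ℕ} (K : Set (Euc n)) : Set (Euc n) :=
  { y | ∀ x ∈ K, (⟪x, y⟫ : ℝ) ≤ 1 }

/-- A cross-polytope: a bijective affine image of `conv{±e₁, …, ±e_n}`. -/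
def IsCrossPolytope {n : ℕ} (K : Set (Euc n)) : Prop :=
  ∃ f : Euc n →ᵃ[ℝ] Euc n, Function.Bijective f ∧
    K = f '' convexHull ℝ
      (⋃ i : Fin n, ({EuclideanSpace.single i (1 : ℝ),
        -EuclideanSpace.single i (1 : ℝ)} : Set (Euc n)))

/-- Symmetry with respect to all coordinate hyperplanes. -/
def SymmCoordHyperplanes {n : ℕ} (K : Set (Euc n)) : Prop :=
  ∀ x ∈ K, ∀ ε : Fin n → ℝ, (∀ i, ε i = 1 ∨ ε i = -1) →
    (show Euc n from WithLp.toLp 2 fun i => ε i * x i) ∈ K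

/-- The central symmetral `(K - K)/2`. -/
def halfDiff {n : ℕ} (K : Set (Euc n)) : Set (Euc n) := (2⁻¹ : ℝ) • (K - K)

/-- A line through `v` with direction `d`. -/
def lineThrough {n : ℕ} (v d : Euc n) : Set (Euc n) := { p | ∃ t : ℝ, p = v + t • d }

/-- The open infinite circular cylinder of radius `r` around the line through `v`
with direction `d`: points at distance `< r` from the line. -/
def openCylinder {n : ℕ} (v d : Euc n) (r : ℝ) : Set (Euc n) :=
  { p | Metric.infDist p (lineThrough v d) < r }

open Set Filter Topology Module

section Pointwise

variable {E : Type*} [AddCommGroup E]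

theorem neg_vadd_set (a : E) (s : Set E) : -(a +ᵥ s) = -a +ᵥ -s := by
  ext x
  simp only [Set.mem_neg, mem_vadd_set_iff_neg_vadd_mem, vadd_eq_add, neg_neg, neg_add_rev,
    add_comm]

variable [Module ℝ E]

theorem smul_vadd_set (c : ℝ) (a : E) (s : Set E) : c • (a +ᵥ s) = c • a +ᵥ c • s := by
  ext x
  simp [mem_smul_set, mem_vadd_set]

theorem smul_coe_submodule {c : ℝ} (hc : c ≠ 0) (W : Submodule ℝ E) : c • (W : Set E) = W := by
  ext x
  refine ⟨?_, fun hx => ⟨c⁻¹ • x, W.smul_mem _ hx, smul_inv_smul₀ hc x⟩⟩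
  rintro ⟨y, hy, rfl⟩
  exact W.smul_mem c hy

theorem vadd_add_smul_neg_eq (z p : E) (c : ℝ) (A K : Set E) :
    ((z + c • z + p) +ᵥ A) + c • -K = z +ᵥ ((p +ᵥ A) + c • -(-z +ᵥ K)) := by
  rw [neg_vadd_set, neg_neg, smul_vadd_set, add_vadd_comm, vadd_add_assoc, vadd_add_assoc,
    vadd_vadd, vadd_vadd, add_assoc]

end Pointwise

section NormedSpace

variable {E : Type*} [NormedAddCommGroup E] [NormedSpace ℝ E]

theorem exists_lt_smul_mem_smul_of_mem_interior {C : Set E} {q : E} (hq : q ∈ interior C)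
    {c : ℝ} (hc : 0 < c) : ∃ s, 0 < s ∧ s < c ∧ c • q ∈ s • C := by
  have hcont : Tendsto (fun u : ℝ => u • q) (𝓝 1) (𝓝 q) :=
    (continuous_id.smul continuous_const : Continuous fun u : ℝ => u • q).tendsto' 1 q
      (one_smul ℝ q)
  have hnear : ∀ᶠ u : ℝ in 𝓝[>] 1, u • q ∈ C :=
    (hcont.eventually (mem_interior_iff_mem_nhds.1 hq)).filter_mono nhdsWithin_le_nhds
  obtain ⟨u, huC, hu⟩ := (hnear.and self_mem_nhdsWithin).exists
  have hu0 : (0 : ℝ) < u := one_pos.trans hu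
  exact ⟨c / u, div_pos hc hu0, div_lt_self hc hu, u • q, huC, by
    simp only [smul_smul, div_mul_cancel₀ _ hu0.ne']⟩

theorem Convex.smul_subset_interior_smul {K : Set E} (hK : Convex ℝ K)
    (h0 : (0 : E) ∈ interior K) {s t : ℝ} (hs : 0 ≤ s) (hst : s < t) :
    s • K ⊆ interior (t • K) := by
  have ht : 0 < t := hs.trans_lt hst
  rw [interior_smul₀ ht.ne']
  rintro _ ⟨y, hy, rfl⟩
  refine ⟨(s / t) • y, ?_, by simp only [smul_smul, mul_div_cancel₀ _ ht.ne']⟩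
  simpa using hK.combo_interior_self_mem_interior h0 hy
    (sub_pos.2 ((div_lt_one ht).2 hst)) (div_nonneg hs ht.le) (sub_add_cancel 1 (s / t))

theorem Convex.smul_subset_smul_of_le {K : Set E} (hK : Convex ℝ K)
    (h0 : (0 : E) ∈ interior K) {s t : ℝ} (hs : 0 ≤ s) (hst : s ≤ t) : s • K ⊆ t • K := by
  rcases hst.eq_or_lt with rfl | hlt
  · rfl
  · exact (hK.smul_subset_interior_smul h0 hs hlt).trans interior_subset

theorem disjoint_interior_vadd_add_smul_neg {K : Set E} (hK : Convex ℝ K) (W : Submodule ℝ E)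
    {p x : E} {c : ℝ} (hc : 0 < c)
    (h : ∀ s ∈ Ioo 0 c, Disjoint (p +ᵥ (W : Set E)) (x +ᵥ (1 + s) • K)) :
    Disjoint (interior ((p +ᵥ (W : Set E)) + c • -K)) (x +ᵥ K) := by
  rw [Set.disjoint_left]
  intro y hy hyK
  rw [vadd_add_assoc, interior_vadd, ← smul_coe_submodule hc.ne' W, ← smul_add,
    interior_smul₀ hc.ne'] at hy
  obtain ⟨_, ⟨q, hq, rfl⟩, rfl⟩ := hy
  obtain ⟨s, hs, hsc, hmem⟩ := exists_lt_smul_mem_smul_of_mem_interior hq hc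
  rw [smul_add, smul_coe_submodule hs.ne'] at hmem
  obtain ⟨w, hw, _, ⟨m, hm, rfl⟩, hwm⟩ := hmem
  refine Set.disjoint_left.1 (h s ⟨hs, hsc⟩) ⟨w, hw, rfl⟩ ?_
  rw [mem_vadd_set_iff_neg_vadd_mem, hK.add_smul zero_le_one hs.le, one_smul]
  rw [mem_vadd_set_iff_neg_vadd_mem] at hyK
  refine ⟨_, hyK, s • -m, smul_mem_smul_set (mem_neg.1 hm), ?_⟩
  simp only [vadd_eq_add, ← hwm, smul_neg]
  abel

theorem exists_mem_fundamentalDomain_disjoint {ι : Type*} [Fintype ι]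
    (B : Module.Basis ι ℝ E) {A S : Set E} {v : E}
    (h : ∀ x ∈ Submodule.span ℤ (range B), Disjoint (v +ᵥ A) (x +ᵥ S)) :
    ∃ p ∈ ZSpan.fundamentalDomain B,
      ∀ x ∈ Submodule.span ℤ (range B), Disjoint (p +ᵥ A) (x +ᵥ S) := by
  refine ⟨ZSpan.fract B v, ZSpan.fract_mem_fundamentalDomain B v, fun x hx => ?_⟩
  have := h (ZSpan.floor B v + x) (add_mem (SetLike.coe_mem _) hx)
  rwa [← vadd_vadd, ← Set.disjoint_vadd_set (a := -(ZSpan.floor B v : E)), vadd_vadd,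
    neg_vadd_vadd, neg_add_eq_sub, ← ZSpan.fract_apply] at this

end NormedSpace

section Flats

variable {E : Type*} [NormedAddCommGroup E] [InnerProductSpace ℝ E]

theorem isClosed_setOf_orthonormal (ι : Type*) [DecidableEq ι] :
    IsClosed {f : ι → E | Orthonormal ℝ f} := by
  simp only [orthonormal_iff_ite, ofPred_forall]
  exact isClosed_iInter fun i => isClosed_iInter fun j =>
    isClosed_eq (by fun_prop) continuous_const

variable [FiniteDimensional ℝ E]

theorem exists_orthonormal_span_eq {k : ℕ} (W : Submodule ℝ E) (hW : finrank ℝ W = k) :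
    ∃ f : Fin k → E, Orthonormal ℝ f ∧ Submodule.span ℝ (range f) = W := by
  let o : OrthonormalBasis (Fin k) ℝ W := (stdOrthonormalBasis ℝ W).reindex (finCongr hW)
  refine ⟨W.subtype ∘ o, o.orthonormal.comp_linearIsometry W.subtypeₗᵢ, ?_⟩
  rw [range_comp, Submodule.span_image, ← o.coe_toBasis, o.toBasis.span_eq, Submodule.map_top,
    Submodule.range_subtype]

theorem exists_subseq_tendsto_flat {k : ℕ} {R : ℝ} {p : ℕ → E} {W : ℕ → Submodule ℝ E}
    (hp : ∀ j, ‖p j‖ ≤ R) (hW : ∀ j, finrank ℝ (W j) = k) :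
    ∃ (p₀ : E) (W₀ : Submodule ℝ E) (φ : ℕ → ℕ), StrictMono φ ∧ finrank ℝ W₀ = k ∧
      ∀ a ∈ p₀ +ᵥ (W₀ : Set E), ∃ a' : ℕ → E, Tendsto a' atTop (𝓝 a) ∧
        ∀ m, a' m ∈ p (φ m) +ᵥ (W (φ m) : Set E) := by
  choose f hf hfW using fun j => exists_orthonormal_span_eq (W j) (hW j)
  have hcompact : IsCompact (Metric.closedBall (0 : E) R ×ˢ
      {g : Fin k → E | Orthonormal ℝ g}) := by
    refine (isCompact_closedBall 0 R).prod <|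
      (isCompact_univ_pi fun _ => isCompact_closedBall (0 : E) 1).of_isClosed_subset
        (isClosed_setOf_orthonormal _) fun g hg i _ => ?_
    simp [hg.1 i]
  obtain ⟨⟨p₀, f₀⟩, ⟨-, hf₀⟩, φ, hφ, hlim⟩ :=
    hcompact.tendsto_subseq (x := fun j => (p j, f j)) fun j => ⟨by simpa using hp j, hf j⟩
  refine ⟨p₀, Submodule.span ℝ (range f₀), φ, hφ, ?_, ?_⟩
  · simpa using finrank_span_eq_card hf₀.linearIndependent
  rintro _ ⟨w, hw, rfl⟩
  obtain ⟨d, rfl⟩ := (Submodule.mem_span_range_iff_exists_fun ℝ).1 hw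
  refine ⟨fun m => p (φ m) + ∑ i, d i • f (φ m) i, ?_, fun m => ?_⟩
  · exact ((by fun_prop : Continuous fun z : E × (Fin k → E) => z.1 + ∑ i, d i • z.2 i)
      |>.tendsto _).comp hlim
  · rw [← hfW]
    exact ⟨_, (Submodule.mem_span_range_iff_exists_fun ℝ).2 ⟨d, rfl⟩, rfl⟩

theorem exists_flat_disjoint_smul_of_forall_lt {K L : Set E} (hK : Convex ℝ K)
    (h0 : (0 : E) ∈ interior K) {k : ℕ} {lam R : ℝ} (hlam : 0 < lam)
    (h : ∀ t ∈ Ioo 0 lam, ∃ (W : Submodule ℝ E) (p : E), finrank ℝ W = k ∧ ‖p‖ ≤ R ∧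
      ∀ x ∈ L, Disjoint (p +ᵥ (W : Set E)) (x +ᵥ t • K)) :
    ∃ (W : Submodule ℝ E) (p : E), finrank ℝ W = k ∧
      ∀ t ∈ Ioo 0 lam, ∀ x ∈ L, Disjoint (p +ᵥ (W : Set E)) (x +ᵥ t • K) := by
  obtain ⟨u, -, hu, hulim⟩ := exists_seq_strictMono_tendsto' hlam
  choose W p hWk hpR hdisj using fun j => h (u j) (hu j)
  obtain ⟨p₀, W₀, φ, hφ, hW₀, happrox⟩ := exists_subseq_tendsto_flat hpR hWk
  refine ⟨W₀, p₀, hW₀, fun t ht x hx => Set.disjoint_left.2 fun a ha haK => ?_⟩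
  obtain ⟨τ, htτ, hτ⟩ := exists_between ht.2
  obtain ⟨a', ha'lim, ha'⟩ := happrox a ha
  -- Points of the approximating flats close to `a` lie in `x + τ K ⊆ x + u (φ m) K`.
  have hnhds : x +ᵥ interior (τ • K) ∈ 𝓝 a :=
    (isOpen_interior.vadd x).mem_nhds
      (vadd_set_mono (hK.smul_subset_interior_smul h0 ht.1.le htτ) haK)
  have hlarge : ∀ᶠ m in atTop, τ ≤ u (φ m) :=
    (hulim.comp hφ.tendsto_atTop).eventually (eventually_ge_nhds hτ)
  obtain ⟨m, hmτ, hmK⟩ := (hlarge.and (ha'lim.eventually hnhds)).exists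
  refine Set.disjoint_left.1 (hdisj (φ m) x hx) (ha' m) (vadd_set_mono ?_ hmK)
  exact interior_subset.trans
    (hK.smul_subset_smul_of_le h0 (ht.1.trans htτ).le hmτ)

end Flats

section Lattice

variable {n : ℕ}

theorem latticeOf_eq_span (b : Fin n → Euc n) :
    latticeOf b = (Submodule.span ℤ (range b) : Set (Euc n)) := by
  ext x
  simp only [latticeOf, mem_ofPred_eq, SetLike.mem_coe, Submodule.mem_span_range_iff_exists_fun,
    Int.cast_smul_eq_zsmul]
  exact ⟨fun ⟨c, hc⟩ => ⟨c, hc.symm⟩, fun ⟨c, hc⟩ => ⟨c, hc.symm⟩⟩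

theorem countable_latticeOf (b : Fin n → Euc n) : (latticeOf b).Countable := by
  refine (countable_range fun c : Fin n → ℤ => ∑ i, (c i : ℝ) • b i).mono ?_
  rintro _ ⟨c, rfl⟩
  exact ⟨c, rfl⟩

theorem latticeOf_smul (c : ℝ) (b : Fin n → Euc n) : latticeOf (c • b) = c • latticeOf b := by
  ext x
  constructor
  · rintro ⟨f, rfl⟩
    exact ⟨_, ⟨f, rfl⟩, by simp [Finset.smul_sum, smul_comm c]⟩
  · rintro ⟨_, ⟨f, rfl⟩, rfl⟩
    exact ⟨f, by simp [Finset.smul_sum, smul_comm c]⟩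

theorem covol_smul (c : ℝ) (b : Fin n → Euc n) : covol (c • b) = |c| ^ n * covol b := by
  have : (Matrix.of fun i j => (c • b) i j) = c • Matrix.of fun i j => b i j := by
    ext i j
    simp
  rw [covol, this, Matrix.det_smul, abs_mul, abs_pow, Fintype.card_fin, covol]

theorem covol_pos {b : Fin n → Euc n} (hb : LinearIndependent ℝ b) : 0 < covol b := by
  have hrows : LinearIndependent ℝ (Matrix.of fun i j => b i j).row :=
    hb.map' (WithLp.linearEquiv 2 ℝ (Fin n → ℝ)).toLinearMap (LinearEquiv.ker _)
  exact abs_pos.2 ((Matrix.isUnit_iff_isUnit_det _).1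
    (Matrix.linearIndependent_rows_iff_isUnit.1 hrows)).ne_zero

theorem volume_fundamentalDomain_eq_covol (b : Module.Basis (Fin n) ℝ (Euc n)) :
    volume (ZSpan.fundamentalDomain b) = ENNReal.ofReal (covol ⇑b) := by
  let b₀ := EuclideanSpace.basisFun (Fin n) ℝ
  rw [ZSpan.measure_fundamentalDomain b volume b₀.toBasis,
    measure_congr (ZSpan.fundamentalDomain_ae_parallelepiped b₀.toBasis volume),
    b₀.coe_toBasis, b₀.volume_parallelepiped, mul_one, covol, Module.Basis.det_apply,
    ← Matrix.det_transpose]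
  rfl

theorem volume_le_covol_of_isLatticePacking {K : Set (Euc n)} (hK : Convex ℝ K)
    {b : Fin n → Euc n} (hb : IsLatticePacking K b) : (volume K).toReal ≤ covol b := by
  let B := basisOfLinearIndependentOfCardEqFinrank' b hb.1 (by simp)
  have hL : latticeOf b = (Submodule.span ℤ (range B) : Set (Euc n)) := by
    rw [latticeOf_eq_span, coe_basisOfLinearIndependentOfCardEqFinrank']
  have : Countable (Submodule.span ℤ (range B)).toAddSubgroup :=
    Set.Countable.to_subtype (s := (Submodule.span ℤ (range B) : Set (Euc n)))
      (hL ▸ countable_latticeOf b)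
  by_contra! hlt
  have hvol : volume (ZSpan.fundamentalDomain B) < volume (interior K) := by
    rw [volume_fundamentalDomain_eq_covol, coe_basisOfLinearIndependentOfCardEqFinrank',
      measure_interior_of_null_frontier (hK.addHaar_frontier volume)]
    exact ((ENNReal.ofReal_lt_ofReal_iff_of_nonneg (covol_pos hb.1).le).2 hlt).trans_le
      ENNReal.ofReal_toReal_le
  obtain ⟨x, y, hxy, hmeet⟩ := exists_pair_mem_lattice_not_disjoint_vadd
    (ZSpan.isAddFundamentalDomain' B volume) measurableSet_interior.nullMeasurableSet hvol
  refine hmeet ?_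
  have : Disjoint (interior ((x : Euc n) +ᵥ K)) (interior ((y : Euc n) +ᵥ K)) :=
    hb.2 (hL ▸ x.2) (hL ▸ y.2) (Subtype.coe_injective.ne hxy)
  rwa [interior_vadd, interior_vadd] at this

theorem div_covol_le_packingDensity {K : Set (Euc n)} (hK : Convex ℝ K) {b : Fin n → Euc n}
    (hb : IsLatticePacking K b) : (volume K).toReal / covol b ≤ packingDensity n K := by
  refine le_csSup ⟨1, ?_⟩ ⟨b, hb, rfl⟩
  rintro _ ⟨b', hb', rfl⟩
  exact div_le_one_of_le₀ (volume_le_covol_of_isLatticePacking hK hb') (covol_pos hb'.1).le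

theorem dImp_le_div_covol {k : ℕ} {K : Set (Euc n)} {b : Fin n → Euc n}
    (hb : LinearIndependent ℝ b) (him : IsImpassable k K (latticeOf b)) :
    dImp n k K ≤ (volume K).toReal / covol b := by
  refine csInf_le ⟨0, ?_⟩ ⟨b, hb, him, rfl⟩
  rintro _ ⟨b', -, -, rfl⟩
  exact div_nonneg ENNReal.toReal_nonneg (abs_nonneg _)

end Lattice

section Impassable

variable {n k : ℕ}

theorem IsImpassable.vadd {K L : Set (Euc n)} (h : IsImpassable k K L) (z : Euc n) :
    IsImpassable k (z +ᵥ K) L := by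
  intro W v hW
  obtain ⟨x, hx, hne⟩ := h W (-z + v) hW
  refine ⟨x, hx, ?_⟩
  have : (v +ᵥ (W : Set (Euc n))) ∩ (x +ᵥ (z +ᵥ K)) =
      z +ᵥ (((-z + v) +ᵥ (W : Set (Euc n))) ∩ (x +ᵥ K)) := by
    rw [vadd_set_inter, vadd_vadd, vadd_vadd, vadd_vadd, add_neg_cancel_left, add_comm z x]
  rw [this]
  exact hne.vadd_set

theorem dImp_vadd (K : Set (Euc n)) (z : Euc n) : dImp n k (z +ᵥ K) = dImp n k K := by
  have himp (L : Set (Euc n)) : IsImpassable k (z +ᵥ K) L ↔ IsImpassable k K L :=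
    ⟨fun h => by simpa using h.vadd (-z), fun h => h.vadd z⟩
  simp only [dImp, himp, measure_vadd]

theorem exists_flat_disjoint_of_not_isImpassable {K L : Set (Euc n)}
    (h : ¬IsImpassable k K L) : ∃ (W : Submodule ℝ (Euc n)) (v : Euc n),
      finrank ℝ W = k ∧ ∀ x ∈ L, Disjoint (v +ᵥ (W : Set (Euc n))) (x +ᵥ K) := by
  simpa [IsImpassable, Set.not_nonempty_iff_eq_empty, Set.disjoint_iff_inter_eq_empty] using h

theorem exists_flat_disjoint_smul_of_lt_dImp {K : Set (Euc n)} {b : Fin n → Euc n}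
    (hb : LinearIndependent ℝ b) {t : ℝ} (ht : 0 < t)
    (hlt : t ^ n * ((volume K).toReal / covol b) < dImp n k K) :
    ∃ (W : Submodule ℝ (Euc n)) (v : Euc n), finrank ℝ W = k ∧
      ∀ x ∈ latticeOf b, Disjoint (v +ᵥ (W : Set (Euc n))) (x +ᵥ t • K) := by
  have hb' : LinearIndependent ℝ (t⁻¹ • b) :=
    hb.units_smul fun _ => Units.mk0 t⁻¹ (inv_ne_zero ht.ne')
  have hdens : (volume K).toReal / covol (t⁻¹ • b) = t ^ n * ((volume K).toReal / covol b) := by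
    rw [covol_smul, abs_inv, abs_of_pos ht, inv_pow, div_mul_eq_div_div, div_inv_eq_mul,
      mul_comm, mul_div_assoc]
  obtain ⟨W, v, hW, hdisj⟩ := exists_flat_disjoint_of_not_isImpassable fun him =>
    hlt.not_ge (hdens ▸ dImp_le_div_covol hb' him)
  refine ⟨W, t • v, hW, fun x hx => ?_⟩
  have hx' : t⁻¹ • x ∈ latticeOf (t⁻¹ • b) := by
    rw [latticeOf_smul]
    exact smul_mem_smul_set hx
  have := (hdisj _ hx').image (f := (t • ·)) (smul_right_injective _ ht.ne').injOn
    (subset_univ _) (subset_univ _)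
  rwa [image_smul, image_smul, smul_vadd_set, smul_vadd_set, smul_coe_submodule ht.ne',
    smul_inv_smul₀ ht.ne'] at this

end Impassable

theorem IsConvexBody.toReal_volume_pos {n : ℕ} {K : Set (Euc n)} (hK : IsConvexBody K) :
    0 < (volume K).toReal :=
  ENNReal.toReal_pos ((isOpen_interior.measure_pos volume hK.2.2).trans_le
    (measure_mono interior_subset)).ne' hK.2.1.measure_lt_top.ne

theorem exists_bounded_flats_disjoint {n k : ℕ} {K : Set (Euc n)} {b : Fin n → Euc n}
    (hb : LinearIndependent ℝ b) : ∃ R, ∀ t, 0 < t →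
      t ^ n * ((volume K).toReal / covol b) < dImp n k K →
      ∃ (W : Submodule ℝ (Euc n)) (p : Euc n), finrank ℝ W = k ∧ ‖p‖ ≤ R ∧
        ∀ x ∈ latticeOf b, Disjoint (p +ᵥ (W : Set (Euc n))) (x +ᵥ t • K) := by
  let B := basisOfLinearIndependentOfCardEqFinrank' b hb (by simp)
  have hL : latticeOf b = (Submodule.span ℤ (range B) : Set (Euc n)) := by
    rw [latticeOf_eq_span, coe_basisOfLinearIndependentOfCardEqFinrank']
  obtain ⟨R, hR⟩ := (Metric.isBounded_iff_subset_closedBall 0).1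
    (ZSpan.fundamentalDomain_isBounded B)
  refine ⟨R, fun t ht hlt => ?_⟩
  obtain ⟨W, v, hW, hdisj⟩ := exists_flat_disjoint_smul_of_lt_dImp hb ht hlt
  rw [hL] at hdisj ⊢
  obtain ⟨p, hp, hpdisj⟩ := exists_mem_fundamentalDomain_disjoint B hdisj
  exact ⟨W, p, hW, mem_closedBall_zero_iff.1 (hR hp), hpdisj⟩

theorem pow_mul_lt_of_lt_rpow_one_div {n : ℕ} (hn : 0 < n) {d δ D t : ℝ} (hd : d ≤ δ)
    (hδ : 0 < δ) (hD : 0 ≤ D) (ht : 0 ≤ t) (htD : t < (D / δ) ^ ((1 : ℝ) / n)) :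
    t ^ n * d < D := by
  rw [one_div, Real.lt_rpow_inv_iff_of_pos ht (by positivity) (by positivity),
    Real.rpow_natCast, lt_div_iff₀ hδ] at htD
  exact (mul_le_mul_of_nonneg_left hd (by positivity)).trans_lt htD

/-- For `1 ≤ k ≤ n-1` and a convex body `K` with `δ_L(K) < d_{n,k}(K)`, for
every lattice packing of translates of `K` there exists a `k`-dimensional affine subspace
`A_k` such that `int(A_k + ((d_{n,k}(K)/δ_L(K))^{1/n} − 1)·(−K))` is disjoint from the
union of the packing. -/
theorem stmt_17 (n k : ℕ) (hk : 1 ≤ k) (hkn : k ≤ n - 1)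
    (K : Set (Euc n)) (hK : IsConvexBody K)
    (hlt : packingDensity n K < dImp n k K)
    (b : Fin n → Euc n) (hb : IsLatticePacking K b) :
    ∃ (W : Submodule ℝ (Euc n)) (v : Euc n), Module.finrank ℝ W = k ∧
      Disjoint
        (interior ((v +ᵥ (W : Set (Euc n))) +
          ((dImp n k K / packingDensity n K) ^ ((1 : ℝ) / (n : ℝ)) - 1) • (-K)))
        (⋃ x ∈ latticeOf b, x +ᵥ K) := by
  have hn : 0 < n := by omega
  set δ := packingDensity n K
  set lam := (dImp n k K / δ) ^ ((1 : ℝ) / n)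
  have hdδ := div_covol_le_packingDensity hK.1 hb
  have hδ : 0 < δ := (div_pos hK.toReal_volume_pos (covol_pos hb.1)).trans_le hdδ
  have hlam : 1 < lam := Real.one_lt_rpow ((one_lt_div hδ).2 hlt) (by positivity)
  obtain ⟨z, hz⟩ := hK.2.2
  have h0 : (0 : Euc n) ∈ interior (-z +ᵥ K) := by
    rw [interior_vadd]
    exact ⟨z, hz, neg_add_cancel z⟩
  obtain ⟨R, hR⟩ := exists_bounded_flats_disjoint (k := k) (K := -z +ᵥ K) hb.1
  obtain ⟨W, p, hW, hdisj⟩ := exists_flat_disjoint_smul_of_forall_lt (hK.1.vadd _) h0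
    (one_pos.trans hlam) fun t ht => hR t ht.1 <| by
      rw [measure_vadd, dImp_vadd]
      exact pow_mul_lt_of_lt_rpow_one_div hn hdδ hδ (hδ.trans hlt).le ht.1.le ht.2
  refine ⟨W, z + (lam - 1) • z + p, hW, Set.disjoint_iUnion₂_right.2 fun x hx => ?_⟩
  have hxK : x +ᵥ K = z +ᵥ (x +ᵥ (-z +ᵥ K)) := by rw [vadd_comm z x, vadd_neg_vadd]
  rw [vadd_add_smul_neg_eq, interior_vadd, hxK, Set.disjoint_vadd_set]
  exact disjoint_interior_vadd_add_smul_neg (hK.1.vadd _) W (sub_pos.2 hlam) fun s hs =>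
    hdisj (1 + s) ⟨by linarith [hs.1], by linarith [hs.2]⟩ x hx
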